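/- arXiv:1801.03800 — 3 statements merged into one kernel-verified Lean document; each statement's English description precedes it below -/
import Mathlib

section
/- If γ : [0,T] → ℝ² is a W^{1,1} curve such that the set {t ∈ [0,T] : γ'(t) = 0} is finite, and θ₁, θ₂ : [0,T] → ℝ/πℤ are continuous functions both satisfying γ'(t) = u_i(t)·(cos θ_i(t), sin θ_i(t)) a.e. for some u_i ∈ L¹, then θ₁ = θ₂. -/
open MeasureTheory Real

/-! Where `g t ≠ 0`, the relation `g t = u • (cos a, sin a)` forces `u ≠ 0` and then determines
`a` modulo `π`, so the two lifts agree at almost every time. Continuous functions that agree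
almost everywhere on a nondegenerate interval agree on all of it. -/

theorem ae_restrict_not_of_finite {α : Type*} [MeasurableSpace α] {μ : Measure α}
    [NullSingletonClass μ] {s : Set α} (hs : MeasurableSet s) {p : α → Prop}
    (h : {x ∈ s | p x}.Finite) : ∀ᵐ x ∂μ.restrict s, ¬ p x := by
  filter_upwards [ae_restrict_of_ae (h.countable.ae_notMem μ), ae_restrict_mem hs]
    with x hx hxs using fun hp ↦ hx ⟨hxs, hp⟩

theorem AddCircle.coe_eq_coe_of_sin_sub_eq_zero {a b : ℝ} (h : sin (a - b) = 0) :
    (a : AddCircle π) = b := by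
  obtain ⟨n, hn⟩ := sin_eq_zero_iff.mp h
  rw [← sub_eq_zero, ← AddCircle.coe_sub, AddCircle.coe_eq_zero_iff]
  exact ⟨n, by simpa using hn⟩

theorem sin_sub_eq_zero_of_smul_cos_sin_eq {a b u v : ℝ} (hu : u ≠ 0)
    (h : u • (cos a, sin a) = v • (cos b, sin b)) : sin (a - b) = 0 := by
  simp only [Prod.smul_mk, smul_eq_mul, Prod.mk.injEq] at h
  have : u * sin (a - b) = 0 := by
    rw [sin_sub]
    linear_combination cos b * h.2 - sin b * h.1
  exact (mul_eq_zero.mp this).resolve_left hu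

theorem stmt1_general (T : ℝ) (hT : 0 < T) (g : ℝ → ℝ × ℝ)
    (hfin : {t ∈ Set.Icc 0 T | g t = 0}.Finite)
    (θ₁ θ₂ : ℝ → AddCircle Real.pi)
    (hc1 : ContinuousOn θ₁ (Set.Icc 0 T)) (hc2 : ContinuousOn θ₂ (Set.Icc 0 T))
    (u₁ u₂ : ℝ → ℝ)
    (h1 : ∀ᵐ t ∂(volume.restrict (Set.Icc 0 T)),
      ∃ a : ℝ, (a : AddCircle Real.pi) = θ₁ t ∧
        g t = u₁ t • (Real.cos a, Real.sin a))
    (h2 : ∀ᵐ t ∂(volume.restrict (Set.Icc 0 T)),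
      ∃ a : ℝ, (a : AddCircle Real.pi) = θ₂ t ∧
        g t = u₂ t • (Real.cos a, Real.sin a)) :
    Set.EqOn θ₁ θ₂ (Set.Icc 0 T) := by
  have hg0 : ∀ᵐ t ∂volume.restrict (Set.Icc 0 T), g t ≠ 0 :=
    ae_restrict_not_of_finite measurableSet_Icc hfin
  refine Measure.eqOn_Icc_of_ae_eq volume hT.ne ?_ hc1 hc2
  filter_upwards [h1, h2, hg0] with t ⟨a, ha, hga⟩ ⟨b, hb, hgb⟩ hgt
  rw [← ha, ← hb]
  exact AddCircle.coe_eq_coe_of_sin_sub_eq_zero <|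
    sin_sub_eq_zero_of_smul_cos_sin_eq (left_ne_zero_of_smul (hga ▸ hgt)) (hga.symm.trans hgb)

/-- uniqueness of continuous lifts with values in `ℝ/πℤ` of a `W^{1,1}` planar
curve whose derivative vanishes only on a finite set. -/
theorem stmt1 (T : ℝ) (hT : 0 < T) (γ g : ℝ → ℝ × ℝ)
    (hg : IntegrableOn g (Set.Icc 0 T))
    (hγ : ∀ t ∈ Set.Icc 0 T, γ t = γ 0 + ∫ s in (0:ℝ)..t, g s)
    (hfin : {t ∈ Set.Icc 0 T | g t = 0}.Finite)
    (θ₁ θ₂ : ℝ → AddCircle Real.pi)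
    (hc1 : ContinuousOn θ₁ (Set.Icc 0 T)) (hc2 : ContinuousOn θ₂ (Set.Icc 0 T))
    (u₁ u₂ : ℝ → ℝ)
    (hu1 : IntegrableOn u₁ (Set.Icc 0 T)) (hu2 : IntegrableOn u₂ (Set.Icc 0 T))
    (h1 : ∀ᵐ t ∂(volume.restrict (Set.Icc 0 T)),
      ∃ a : ℝ, (a : AddCircle Real.pi) = θ₁ t ∧
        g t = u₁ t • (Real.cos a, Real.sin a))
    (h2 : ∀ᵐ t ∂(volume.restrict (Set.Icc 0 T)),
      ∃ a : ℝ, (a : AddCircle Real.pi) = θ₂ t ∧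
        g t = u₂ t • (Real.cos a, Real.sin a)) :
    Set.EqOn θ₁ θ₂ (Set.Icc 0 T) :=
  stmt1_general T hT g hfin θ₁ θ₂ hc1 hc2 u₁ u₂ h1 h2
end

section
/- Let f : ℝ² → ℝ be a Morse function. Then the set Sf = {(x,y,θ) ∈ ℝ² × P¹ : ∇f(x,y) ≠ 0 and tan θ = ∂_y f(x,y)/∂_x f(x,y)} ∪ {(x,y,θ) : ∇f(x,y) = 0, θ ∈ P¹} is an embedded 2-dimensional C^∞ submanifold of ℝ² × P¹. -/
/-- For a Morse function `f : ℝ² → ℝ`, the set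
`Sf = {(x,y,θ) : sin θ ⬝ ∂ₓf = cos θ ⬝ ∂_yf}` (which over noncritical points is the graph of
`θ = arctan(∂_yf/∂ₓf)` mod π and contains the whole fiber over critical points) is an
embedded 2-dimensional `C^∞` submanifold: locally it is a regular level set of a smooth
real-valued function with nonvanishing differential. -/
theorem stmt8 (f : ℝ × ℝ → ℝ) (hf : ContDiff ℝ (⊤ : ℕ∞) f)
    (hMorse : ∀ p : ℝ × ℝ, fderiv ℝ f p = 0 →
      ∀ w : ℝ × ℝ, w ≠ 0 → fderiv ℝ (fun q => fderiv ℝ f q) p w ≠ 0) :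
    ∀ p ∈ {q : ℝ × ℝ × ℝ |
        Real.sin q.2.2 * fderiv ℝ f (q.1, q.2.1) (1, 0) =
          Real.cos q.2.2 * fderiv ℝ f (q.1, q.2.1) (0, 1)},
      ∃ U : Set (ℝ × ℝ × ℝ), IsOpen U ∧ p ∈ U ∧
        ∃ F : ℝ × ℝ × ℝ → ℝ, ContDiff ℝ (⊤ : ℕ∞) F ∧
          (∀ q ∈ U, fderiv ℝ F q ≠ 0) ∧
          {q : ℝ × ℝ × ℝ |
            Real.sin q.2.2 * fderiv ℝ f (q.1, q.2.1) (1, 0) =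
              Real.cos q.2.2 * fderiv ℝ f (q.1, q.2.1) (0, 1)} ∩ U
            = {q ∈ U | F q = 0} := by
  intro p hp
  -- the derivative of f is smooth
  have hfd : ContDiff ℝ (⊤ : ℕ∞) (fderiv ℝ f) := hf.fderiv_right (by simp)
  -- component functions of the gradient
  set a : ℝ × ℝ → ℝ := fun q => fderiv ℝ f q (1, 0) with ha_def
  set b : ℝ × ℝ → ℝ := fun q => fderiv ℝ f q (0, 1) with hb_def
  have ha : ContDiff ℝ (⊤ : ℕ∞) a := hfd.clm_apply contDiff_const
  have hb : ContDiff ℝ (⊤ : ℕ∞) b := hfd.clm_apply contDiff_const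
  -- the global defining function
  set F : ℝ × ℝ × ℝ → ℝ := fun q =>
    Real.sin q.2.2 * a (q.1, q.2.1) - Real.cos q.2.2 * b (q.1, q.2.1) with hF_def
  -- projections as continuous linear maps
  set P : (ℝ × ℝ × ℝ) →L[ℝ] ℝ × ℝ :=
    (ContinuousLinearMap.fst ℝ ℝ (ℝ × ℝ)).prod
      ((ContinuousLinearMap.fst ℝ ℝ ℝ).comp (ContinuousLinearMap.snd ℝ ℝ (ℝ × ℝ))) with hP_def
  set T : (ℝ × ℝ × ℝ) →L[ℝ] ℝ :=
    (ContinuousLinearMap.snd ℝ ℝ ℝ).comp (ContinuousLinearMap.snd ℝ ℝ (ℝ × ℝ)) with hT_def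
  have hProj : ContDiff ℝ (⊤ : ℕ∞) (fun q : ℝ × ℝ × ℝ => (q.1, q.2.1)) :=
    contDiff_fst.prodMk (contDiff_snd.fst)
  have hF : ContDiff ℝ (⊤ : ℕ∞) F := by
    apply ContDiff.sub
    · exact (Real.contDiff_sin.comp contDiff_snd.snd).mul (ha.comp hProj)
    · exact (Real.contDiff_cos.comp contDiff_snd.snd).mul (hb.comp hProj)
  -- compute the derivative of F at an arbitrary point
  have key : ∀ q : ℝ × ℝ × ℝ,
      HasFDerivAt F
        ((Real.sin q.2.2 • ((fderiv ℝ a (q.1, q.2.1)).comp P)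
            + a (q.1, q.2.1) • (Real.cos q.2.2 • T))
          - (Real.cos q.2.2 • ((fderiv ℝ b (q.1, q.2.1)).comp P)
            + b (q.1, q.2.1) • ((-Real.sin q.2.2) • T))) q := by
    intro q
    have hPq : HasFDerivAt (fun r : ℝ × ℝ × ℝ => (r.1, r.2.1)) P q := P.hasFDerivAt
    have hTq : HasFDerivAt (fun r : ℝ × ℝ × ℝ => r.2.2) T q := T.hasFDerivAt
    have hsin : HasFDerivAt (fun r : ℝ × ℝ × ℝ => Real.sin r.2.2)
        (Real.cos q.2.2 • T) q :=
      by have := (Real.hasDerivAt_sin q.2.2).comp_hasFDerivAt q hTq; exact this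
    have hcos : HasFDerivAt (fun r : ℝ × ℝ × ℝ => Real.cos r.2.2)
        ((-Real.sin q.2.2) • T) q :=
      by have := (Real.hasDerivAt_cos q.2.2).comp_hasFDerivAt q hTq; exact this
    have haq : HasFDerivAt (fun r : ℝ × ℝ × ℝ => a (r.1, r.2.1))
        ((fderiv ℝ a (q.1, q.2.1)).comp P) q :=
      by have := ((ha.differentiable (by simp) (q.1, q.2.1)).hasFDerivAt).comp q hPq; exact this
    have hbq : HasFDerivAt (fun r : ℝ × ℝ × ℝ => b (r.1, r.2.1))
        ((fderiv ℝ b (q.1, q.2.1)).comp P) q :=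
      by have := ((hb.differentiable (by simp) (q.1, q.2.1)).hasFDerivAt).comp q hPq; exact this
    exact (hsin.mul haq).sub (hcos.mul hbq)
  -- the open set where the derivative of F does not vanish
  set U : Set (ℝ × ℝ × ℝ) := {q | fderiv ℝ F q ≠ 0} with hU_def
  have hUopen : IsOpen U := by
    have hcd : ContDiff ℝ (⊤ : ℕ∞) (fderiv ℝ F) := hF.fderiv_right (by simp)
    exact isOpen_compl_singleton.preimage hcd.continuous
  -- p belongs to U
  have hpU : p ∈ U := by
    have hDF := (key p).fderiv
    set x := p.1
    set y := p.2.1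
    set θ := p.2.2
    have hps : Real.sin θ * a (x, y) = Real.cos θ * b (x, y) := hp
    by_cases hcrit : fderiv ℝ f (x, y) = 0
    · -- critical point: use the Morse condition
      have hw : ((Real.sin θ, -Real.cos θ) : ℝ × ℝ) ≠ 0 := by
        intro h
        have h1 : Real.sin θ = 0 := congrArg Prod.fst h
        have h2 : -Real.cos θ = 0 := congrArg Prod.snd h
        have := Real.sin_sq_add_cos_sq θ
        rw [h1] at this
        have h2' : Real.cos θ = 0 := by linarith [neg_eq_zero.mp h2]
        rw [h2'] at this; norm_num at this
      have hH := hMorse (x, y) hcrit (Real.sin θ, -Real.cos θ) hw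
      obtain ⟨u, hu⟩ : ∃ u : ℝ × ℝ,
          fderiv ℝ (fun q => fderiv ℝ f q) (x, y) (Real.sin θ, -Real.cos θ) u ≠ 0 := by
        by_contra h
        push_neg at h
        exact hH (ContinuousLinearMap.ext fun u => h u)
      -- second derivative symmetry
      have hsymm : ∀ v w : ℝ × ℝ,
          fderiv ℝ (fderiv ℝ f) (x, y) v w = fderiv ℝ (fderiv ℝ f) (x, y) w v := by
        intro v w
        exact second_derivative_symmetric
          (fun z => (hf.differentiable (by simp) z).hasFDerivAt)
          ((hfd.differentiable (by simp) (x, y)).hasFDerivAt) v w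
      -- the fderiv of a and b in terms of the second derivative
      have hacrit : a (x, y) = 0 := by simp [ha_def, hcrit]
      have hbcrit : b (x, y) = 0 := by simp [hb_def, hcrit]
      have hfa : ∀ u : ℝ × ℝ, fderiv ℝ a (x, y) u = fderiv ℝ (fderiv ℝ f) (x, y) u (1, 0) := by
        intro u
        have := fderiv_clm_apply (c := fderiv ℝ f) (u := fun _ => ((1 : ℝ), (0 : ℝ)))
          (hfd.differentiable (by simp) (x, y)) (differentiableAt_const _)
        rw [ha_def]
        rw [this]
        simp
      have hfb : ∀ u : ℝ × ℝ, fderiv ℝ b (x, y) u = fderiv ℝ (fderiv ℝ f) (x, y) u (0, 1) := by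
        intro u
        have := fderiv_clm_apply (c := fderiv ℝ f) (u := fun _ => ((0 : ℝ), (1 : ℝ)))
          (hfd.differentiable (by simp) (x, y)) (differentiableAt_const _)
        rw [hb_def]
        rw [this]
        simp
      intro h0
      have h0' : fderiv ℝ F p = 0 := h0
      have hzero : fderiv ℝ F p (u.1, u.2, 0) ≠ 0 := by
        rw [hDF]
        simp only [ContinuousLinearMap.sub_apply, ContinuousLinearMap.add_apply,
          ContinuousLinearMap.smul_apply, ContinuousLinearMap.comp_apply, hP_def, hT_def,
          ContinuousLinearMap.prod_apply, ContinuousLinearMap.coe_fst',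
          ContinuousLinearMap.coe_snd', ContinuousLinearMap.coe_comp',
          Function.comp_apply, hacrit, hbcrit]
        have hPu : (P (u.1, u.2, 0)) = u := by
          simp [hP_def]
        have hTu : (T ((u.1, u.2, 0) : ℝ × ℝ × ℝ)) = 0 := by simp [hT_def]
        rw [hfa, hfb]
        have : Real.sin θ * fderiv ℝ (fderiv ℝ f) (x, y) u (1, 0)
            - Real.cos θ * fderiv ℝ (fderiv ℝ f) (x, y) u (0, 1)
            = fderiv ℝ (fderiv ℝ f) (x, y) u (Real.sin θ, -Real.cos θ) := by
          have : ((Real.sin θ, -Real.cos θ) : ℝ × ℝ)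
              = Real.sin θ • ((1 : ℝ), (0 : ℝ)) + (-Real.cos θ) • ((0 : ℝ), (1 : ℝ)) := by
            simp [Prod.ext_iff]
          rw [this, map_add, map_smul, map_smul]
          ring_nf
        simp only [smul_eq_mul, mul_zero, add_zero, zero_mul, sub_zero]
        rw [this, hsymm]
        exact hu
      exact hzero (by rw [h0']; simp)
    · -- noncritical point: the θ-derivative is nonzero
      intro h0
      have h0' : fderiv ℝ F p = 0 := h0
      have hzero : fderiv ℝ F p ((0 : ℝ), (0 : ℝ), (1 : ℝ)) = 0 := by rw [h0']; simp
      rw [hDF] at hzero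
      simp only [ContinuousLinearMap.sub_apply, ContinuousLinearMap.add_apply,
        ContinuousLinearMap.smul_apply, ContinuousLinearMap.comp_apply, hP_def, hT_def,
        ContinuousLinearMap.prod_apply, ContinuousLinearMap.coe_fst',
        ContinuousLinearMap.coe_snd', ContinuousLinearMap.coe_comp',
        Function.comp_apply, smul_eq_mul] at hzero
      have hkey : a (x, y) * Real.cos θ + b (x, y) * Real.sin θ = 0 := by
        have z1 : fderiv ℝ a (x, y) ((0 : ℝ), (0 : ℝ)) = 0 := by
          have hz : ((0 : ℝ), (0 : ℝ)) = (0 : ℝ × ℝ) := rfl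
          rw [hz, map_zero]
        have z2 : fderiv ℝ b (x, y) ((0 : ℝ), (0 : ℝ)) = 0 := by
          have hz : ((0 : ℝ), (0 : ℝ)) = (0 : ℝ × ℝ) := rfl
          rw [hz, map_zero]
        rw [z1, z2] at hzero
        linear_combination hzero
      have pyth := Real.sin_sq_add_cos_sq θ
      have hA : a (x, y) = 0 := by
        linear_combination Real.sin θ * hps + Real.cos θ * hkey - a (x, y) * pyth
      have hB : b (x, y) = 0 := by
        linear_combination (-Real.cos θ) * hps + Real.sin θ * hkey - b (x, y) * pyth
      apply hcrit
      apply ContinuousLinearMap.ext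
      intro v
      have hv : (v : ℝ × ℝ) = v.1 • ((1 : ℝ), (0 : ℝ)) + v.2 • ((0 : ℝ), (1 : ℝ)) := by
        simp [Prod.ext_iff]
      rw [hv, map_add, map_smul, map_smul]
      have ha0 : fderiv ℝ f (x, y) (1, 0) = 0 := hA
      have hb0 : fderiv ℝ f (x, y) (0, 1) = 0 := hB
      rw [ha0, hb0]
      simp
  refine ⟨U, hUopen, hpU, F, hF, fun q hq => hq, ?_⟩
  ext q
  simp only [Set.mem_inter_iff, Set.mem_setOf_eq, Set.mem_sep_iff, hF_def]
  constructor
  · rintro ⟨hq1, hq2⟩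
    exact ⟨hq2, by rw [sub_eq_zero]; exact hq1⟩
  · rintro ⟨hq1, hq2⟩
    exact ⟨by rw [← sub_eq_zero]; exact hq2, hq1⟩
end

section
/- Let A(λ, μ) ∈ ℝ^{N×N} be defined by A = −2π² diag((λ cos θ_r + μ sin θ_r)²)_{r=0,…,N−1} + Λ_N, where θ_r = 2πr/N and Λ_N is the periodic second-difference matrix ((Λ_N c)_r = c_{r+1} − 2c_r + c_{r−1}, indices mod N). Then for every n ∈ ℤ/Nℤ, the cyclic shift operator S_n (defined by (S_n c)_r = c_{r+n}) satisfies S_n A(λ,μ) S_n^{-1} = A(λ', μ'), where (λ', μ') = R_{−n}(λ, μ) is the rotation of (λ,μ) by angle −2πn/N. -/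
/-- The matrix `A(λ,μ) = −2π² diag((λ cos θ_r + μ sin θ_r)²) + Λ_N` of the decoupled
semi-discrete hypoelliptic heat equation, with `θ_r = 2πr/N` and `Λ_N` the periodic
second-difference matrix. -/
noncomputable def Amat (N : ℕ) [NeZero N] (lam mu : ℝ) :
    Matrix (ZMod N) (ZMod N) ℝ :=
  Matrix.of fun r s =>
    (if s = r then
        -2 * Real.pi ^ 2 *
          (lam * Real.cos (2 * Real.pi * r.val / N) +
            mu * Real.sin (2 * Real.pi * r.val / N)) ^ 2 - 2
      else 0) +
    (if s = r + 1 then 1 else 0) + (if s = r - 1 then 1 else 0)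

/-- The cyclic shift matrix `(Sₙ c)_r = c_{r+n}`. -/
def Smat (N : ℕ) [NeZero N] (n : ZMod N) : Matrix (ZMod N) (ZMod N) ℝ :=
  Matrix.of fun r s => if s = r + n then 1 else 0

lemma Smat_mul (N : ℕ) [NeZero N] (n : ZMod N) (M : Matrix (ZMod N) (ZMod N) ℝ)
    (r s : ZMod N) : (Smat N n * M) r s = M (r + n) s := by
  simp [Smat, Matrix.mul_apply]

lemma mul_Smat (N : ℕ) [NeZero N] (n : ZMod N) (M : Matrix (ZMod N) (ZMod N) ℝ)
    (r s : ZMod N) : (M * Smat N (-n)) r s = M r (s + n) := by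
  have : ∀ t : ZMod N, (t = s + n) = (s = t + -n) := by
    intro t; simp [eq_comm, sub_eq_iff_eq_add, ← sub_eq_add_neg, eq_sub_iff_add_eq, eq_comm]
  simp [Smat, Matrix.mul_apply, ← this]

lemma val_cos (N : ℕ) [NeZero N] (r n : ZMod N) :
    Real.cos (2 * Real.pi * ((r + n).val) / N) =
      Real.cos (2 * Real.pi * r.val / N + 2 * Real.pi * n.val / N) ∧
    Real.sin (2 * Real.pi * ((r + n).val) / N) =
      Real.sin (2 * Real.pi * r.val / N + 2 * Real.pi * n.val / N) := by
  have hN : (N : ℝ) ≠ 0 := Nat.cast_ne_zero.mpr (NeZero.ne N)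
  set k : ℕ := (r.val + n.val) / N with hk
  have hmod := Nat.mod_add_div (r.val + n.val) N
  have hval : (((r + n).val : ℕ) : ℝ) = (r.val : ℝ) + n.val - N * k := by
    rw [ZMod.val_add]
    have : (((r.val + n.val) % N : ℕ) : ℝ) + N * k = (r.val : ℝ) + n.val := by
      exact_mod_cast hmod
    linarith
  have harg : 2 * Real.pi * ((r + n).val) / N =
      2 * Real.pi * r.val / N + 2 * Real.pi * n.val / N + ((-(k:ℤ) : ℤ) : ℝ) * (2 * Real.pi) := by
    rw [hval]
    push_cast
    field_simp
    ring
  rw [harg, Real.cos_add_int_mul_two_pi, Real.sin_add_int_mul_two_pi]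
  exact ⟨rfl, rfl⟩

/-- the cyclic shift conjugates `A(λ,μ)` to `A(λ',μ')`, where
`(λ',μ') = R_{−n}(λ,μ)` is the rotation of `(λ,μ)` by angle `−2πn/N`. -/
theorem stmt13 (N : ℕ) [NeZero N] (lam mu : ℝ) (n : ZMod N) :
    Smat N n * Smat N (-n) = 1 ∧
    Smat N n * Amat N lam mu * Smat N (-n) =
      Amat N
        (lam * Real.cos (2 * Real.pi * n.val / N) + mu * Real.sin (2 * Real.pi * n.val / N))
        (-lam * Real.sin (2 * Real.pi * n.val / N) + mu * Real.cos (2 * Real.pi * n.val / N)) := by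
  constructor
  · ext r s
    rw [Smat_mul]
    simp [Smat, Matrix.one_apply, eq_comm]
  · ext r s
    rw [mul_Smat, Smat_mul]
    obtain ⟨hc, hs⟩ := val_cos N r n
    have h1 : (s + n = r + n) ↔ (s = r) := add_left_inj n
    have h2 : (s + n = r + n + 1) ↔ (s = r + 1) := by
      constructor <;> intro h
      · have : s + n = (r + 1) + n := by rw [h]; ring
        exact (add_left_inj n).mp this
      · rw [h]; ring
    have h3 : (s + n = r + n - 1) ↔ (s = r - 1) := by
      constructor <;> intro h
      · have : s + n = (r - 1) + n := by rw [h]; ring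
        exact (add_left_inj n).mp this
      · rw [h]; ring
    simp only [Amat, Matrix.of_apply, h1, h2, h3, hc, hs]
    by_cases hrs : s = r
    · subst hrs
      simp only [if_pos rfl]
      congr 2
      rw [Real.cos_add, Real.sin_add]
      ring
    · simp [hrs]
end
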